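/- Let (W, S) be a Coxeter system, I ⊆ S, and t a reflection. Define L_t^I = {wW_I : ℓ((tw)^I) > ℓ(w^I)}, R_t^I and F_t^I analogously with < and =. Then the coset left-folding map t⁺(wW_I) := t⁺(w)W_I is well defined and satisfies: t⁺(wW_I) = twW_I if wW_I ∈ R_t^I, and t⁺(wW_I) = wW_I if wW_I ∈ L_t^I ∪ F_t^I. -/

import Mathlib

variable {B W : Type*} [Group W] {M : CoxeterMatrix B}

/-- The standard parabolic subgroup `W_I`. -/
def parab (cs : CoxeterSystem M W) (I : Set B) : Subgroup W :=
  Subgroup.closure (cs.simple '' I)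

/-- `ℓ(w^I)`: the minimal length of an element in the coset `x = wW_I`. -/
noncomputable def minLenQ (cs : CoxeterSystem M W) (I : Set B) (x : W ⧸ parab cs I) : ℕ :=
  sInf (cs.length '' {u : W | (QuotientGroup.mk u : W ⧸ parab cs I) = x})

/-- The left-folding map `t⁺` on `W`: `t⁺(w) = tw` if `ℓ(tw) < ℓ(w)`, else `w`. -/
noncomputable def foldW (cs : CoxeterSystem M W) (t w : W) : W :=
  if cs.length (t * w) < cs.length w then t * w else w

/-- The left-folding map on cosets, defined via an arbitrary representative. -/
noncomputable def foldQ (cs : CoxeterSystem M W) (I : Set B) (t : W)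
    (x : W ⧸ parab cs I) : W ⧸ parab cs I :=
  QuotientGroup.mk (foldW cs t x.out)

/-!
The parity `η(w, t) = cs.invParity w t` of the number of occurrences of `t` in the right
inversion sequence of a word for `w` does not depend on the word: it is read off the action of
`W` on `W × ZMod 2` in which `s` sends `(t, e)` to `(s t s, e + [t = s])`. It satisfies the
cocycle rule `η(uv, t) = η(v, t) + η(u, v t v⁻¹)`, and for a reflection `t` it equals `1`
exactly when `ℓ(wt) < ℓ(w)`. A word in the generators of `W_I` never produces a reflection
outside `W_I`, so `η(p, r) = 0` for `p ∈ W_I` and `r ∉ W_I`. Hence, when `twW_I ≠ wW_I`,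
whether `t` shortens `w` is the same for every representative of `wW_I`; testing a minimal one
shows that this happens iff `ℓ((tw)^I) < ℓ(w^I)`. When `twW_I = wW_I` both candidates for
`t⁺(w)` lie in `wW_I`.
-/

open scoped Classical
open Finset

section ReflectionPerm

variable {G : Type*} [Group G]

lemma conj_eq_iff_eq_conj_inv (x t y : G) : x * t * x⁻¹ = y ↔ t = x⁻¹ * y * x := by
  constructor <;> rintro rfl <;> group

noncomputable def reflectionPerm (s : G) : Equiv.Perm (G × ZMod 2) where
  toFun p := (s * p.1 * s⁻¹, p.2 + if p.1 = s then 1 else 0)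
  invFun p := (s⁻¹ * p.1 * s, p.2 + if p.1 = s then 1 else 0)
  left_inv := by
    rintro ⟨t, e⟩
    have hfix : s * t * s⁻¹ = s ↔ t = s := by rw [mul_inv_eq_iff_eq_mul, mul_right_inj]
    simp only [hfix, add_assoc, CharTwo.add_self_eq_zero, add_zero]
    group
  right_inv := by
    rintro ⟨t, e⟩
    have hfix : s⁻¹ * t * s = s ↔ t = s := by
      rw [mul_assoc, inv_mul_eq_iff_eq_mul, mul_left_inj]
    simp only [hfix, add_assoc, CharTwo.add_self_eq_zero, add_zero]
    group

lemma reflectionPerm_apply (s t : G) (e : ZMod 2) :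
    reflectionPerm s (t, e) = (s * t * s⁻¹, e + if t = s then 1 else 0) := rfl

lemma reflectionPerm_mul_pow_apply {a b : G} (ha : a⁻¹ = a) (hb : b⁻¹ = b) (n : ℕ) (t : G)
    (e : ZMod 2) :
    ((reflectionPerm a * reflectionPerm b) ^ n) (t, e) =
      ((a * b) ^ n * t * ((a * b) ^ n)⁻¹,
        e + ∑ j ∈ range (2 * n), if t = (b * a) ^ j * b then 1 else 0) := by
  induction n with
  | zero => simp
  | succ n ih =>
    have hinv : ((a * b) ^ n)⁻¹ = (b * a) ^ n := by rw [← inv_pow, mul_inv_rev, ha, hb]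
    have hsemi : b * (a * b) ^ n = (b * a) ^ n * b :=
      (SemiconjBy.pow_right (mul_assoc b a b).symm n).eq
    have h_even : ((a * b) ^ n)⁻¹ * b * (a * b) ^ n = (b * a) ^ (2 * n) * b := by
      rw [mul_assoc, hsemi, hinv, ← mul_assoc, two_mul, pow_add]
    have h_odd : (b * (a * b) ^ n)⁻¹ * a * (b * (a * b) ^ n) = (b * a) ^ (2 * n + 1) * b := by
      rw [mul_inv_rev, hb, hinv, hsemi, show 2 * n + 1 = n + 1 + n by ring, pow_add, pow_succ]
      simp only [mul_assoc]
    rw [pow_succ', Equiv.Perm.mul_apply, ih, Equiv.Perm.mul_apply, reflectionPerm_apply,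
      reflectionPerm_apply, show 2 * (n + 1) = 2 * n + 1 + 1 by ring, sum_range_succ,
      sum_range_succ, conj_eq_iff_eq_conj_inv, h_even,
      show b * ((a * b) ^ n * t * ((a * b) ^ n)⁻¹) * b⁻¹
        = b * (a * b) ^ n * t * (b * (a * b) ^ n)⁻¹ by group,
      conj_eq_iff_eq_conj_inv, h_odd, pow_succ' (a * b)]
    simp only [mul_inv_rev, mul_assoc, add_assoc]

lemma reflectionPerm_mul_pow_eq_one {a b : G} (ha : a⁻¹ = a) (hb : b⁻¹ = b) {m : ℕ}
    (hm : (a * b) ^ m = 1) : (reflectionPerm a * reflectionPerm b) ^ m = 1 := by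
  -- the sum runs twice over a period of `j ↦ (b * a) ^ j`
  have hm' : (b * a) ^ m = 1 := by rw [← ha, ← hb, ← mul_inv_rev, inv_pow, hm, inv_one]
  ext ⟨t, e⟩ : 1
  rw [reflectionPerm_mul_pow_apply ha hb, hm, two_mul, sum_range_add]
  simp only [pow_add, hm', one_mul, inv_one, mul_one, CharTwo.add_self_eq_zero, add_zero,
    Equiv.Perm.coe_one, id_eq]

end ReflectionPerm

lemma QuotientGroup.mk_mul_eq_mk_iff {G : Type*} [Group G] (H : Subgroup G) (t w : G) :
    (QuotientGroup.mk (t * w) : G ⧸ H) = QuotientGroup.mk w ↔ w⁻¹ * t * w ∈ H := by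
  rw [QuotientGroup.eq, ← inv_mem_iff, mul_inv_rev, inv_inv, mul_assoc]

lemma QuotientGroup.mk_mul_left_congr {G : Type*} [Group G] {H : Subgroup G} (t : G) {u w : G}
    (h : (QuotientGroup.mk u : G ⧸ H) = QuotientGroup.mk w) :
    (QuotientGroup.mk (t * u) : G ⧸ H) = QuotientGroup.mk (t * w) := by
  simpa only [smul_eq_mul, MulAction.Quotient.smul_mk] using congrArg (t • ·) h

namespace CoxeterSystem

variable (cs : CoxeterSystem M W)

theorem isLiftable_reflectionPerm : M.IsLiftable fun i ↦ reflectionPerm (cs.simple i) :=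
  fun i i' ↦ reflectionPerm_mul_pow_eq_one (cs.inv_simple i) (cs.inv_simple i')
    (cs.simple_mul_simple_pow i i')

noncomputable def reflectionRep : W →* Equiv.Perm (W × ZMod 2) :=
  cs.lift ⟨_, cs.isLiftable_reflectionPerm⟩

noncomputable def invParity (w t : W) : ZMod 2 := (cs.reflectionRep w (t, 0)).2

lemma reflectionRep_simple (i : B) :
    cs.reflectionRep (cs.simple i) = reflectionPerm (cs.simple i) :=
  cs.lift_apply_simple cs.isLiftable_reflectionPerm i

lemma reflectionRep_apply (w t : W) (e : ZMod 2) :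
    cs.reflectionRep w (t, e) = (w * t * w⁻¹, e + cs.invParity w t) := by
  induction w using cs.simple_induction_left generalizing t e with
  | one => simp [invParity]
  | mul_simple_left w i ih =>
    have h : ∀ e', cs.reflectionRep (cs.simple i * w) (t, e') =
        (cs.simple i * w * t * (cs.simple i * w)⁻¹,
          e' + (cs.invParity w t + if w * t * w⁻¹ = cs.simple i then 1 else 0)) := by
      intro e'
      rw [map_mul, Equiv.Perm.mul_apply, ih, reflectionRep_simple, reflectionPerm_apply,
        mul_inv_rev, add_assoc]
      simp only [mul_assoc]
    have hparity : cs.invParity (cs.simple i * w) t =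
        cs.invParity w t + if w * t * w⁻¹ = cs.simple i then 1 else 0 :=
      (congrArg Prod.snd (h 0)).trans (zero_add _)
    rw [h, hparity]

lemma invParity_mul (u v t : W) :
    cs.invParity (u * v) t = cs.invParity v t + cs.invParity u (v * t * v⁻¹) := by
  rw [invParity, map_mul, Equiv.Perm.mul_apply, reflectionRep_apply, reflectionRep_apply,
    zero_add]

lemma invParity_one (t : W) : cs.invParity 1 t = 0 := by
  simp [invParity]

lemma invParity_simple (i : B) (t : W) :
    cs.invParity (cs.simple i) t = if t = cs.simple i then 1 else 0 := by
  rw [invParity, reflectionRep_simple, reflectionPerm_apply, zero_add]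

lemma invParity_inv (v x : W) : cs.invParity v⁻¹ (v * x * v⁻¹) = cs.invParity v x := by
  have h := cs.invParity_mul v v⁻¹ (v * x * v⁻¹)
  rwa [mul_inv_cancel, invParity_one, show v⁻¹ * (v * x * v⁻¹) * v⁻¹⁻¹ = x by group,
    eq_comm, CharTwo.add_eq_zero] at h

lemma invParity_self {t : W} (ht : cs.IsReflection t) : cs.invParity t t = 1 := by
  obtain ⟨v, i, rfl⟩ := ht
  rw [invParity_mul, show v⁻¹ * (v * cs.simple i * v⁻¹) * v⁻¹⁻¹ = cs.simple i by group,
    invParity_mul, invParity_inv, invParity_simple, if_pos rfl, mul_inv_cancel_right,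
    add_left_comm, CharTwo.add_self_eq_zero, add_zero]

lemma invParity_wordProd_eq_zero {t : W} {ω : List B} (h : t ∉ cs.rightInvSeq ω) :
    cs.invParity (cs.wordProd ω) t = 0 := by
  induction ω with
  | nil => rw [wordProd_nil, invParity_one]
  | cons i ω ih =>
    rw [rightInvSeq, List.mem_cons, not_or] at h
    rw [wordProd_cons, invParity_mul, ih h.2, invParity_simple,
      if_neg ((conj_eq_iff_eq_conj_inv _ _ _).not.mpr h.1), zero_add]

lemma length_mul_lt_of_invParity_eq_one {w t : W} (h : cs.invParity w t = 1) :
    cs.length (w * t) < cs.length w := by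
  obtain ⟨ω, hω, rfl⟩ := cs.exists_isReduced w
  refine (cs.isRightInversion_of_mem_rightInvSeq hω ?_).2
  by_contra hmem
  rw [cs.invParity_wordProd_eq_zero hmem] at h
  exact zero_ne_one h

lemma invParity_eq_one_iff {t : W} (ht : cs.IsReflection t) (w : W) :
    cs.invParity w t = 1 ↔ cs.length (w * t) < cs.length w := by
  refine ⟨cs.length_mul_lt_of_invParity_eq_one, fun hlt ↦ ?_⟩
  by_contra hne
  have h0 : cs.invParity w t = 0 := (by decide : ∀ x : ZMod 2, x ≠ 1 → x = 0) _ hne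
  have h1 : cs.invParity (w * t) t = 1 := by
    rw [invParity_mul, invParity_self cs ht, mul_inv_cancel_right, h0, add_zero]
  have hgt := cs.length_mul_lt_of_invParity_eq_one h1
  rw [mul_assoc, ht.mul_self, mul_one] at hgt
  exact lt_asymm hlt hgt

lemma invParity_inv_eq_one_iff {t : W} (ht : cs.IsReflection t) (w : W) :
    cs.invParity w⁻¹ t = 1 ↔ cs.length (t * w) < cs.length w := by
  rw [invParity_eq_one_iff cs ht, ← cs.length_inv (w⁻¹ * t), mul_inv_rev, inv_inv, ht.inv,
    cs.length_inv]

end CoxeterSystem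

section Parabolic

open CoxeterSystem

variable {cs : CoxeterSystem M W} {I : Set B}

lemma invParity_eq_zero_of_mem_parab {p r : W} (hp : p ∈ parab cs I) (hr : r ∉ parab cs I) :
    cs.invParity p r = 0 := by
  have step : ∀ i ∈ I, ∀ y ∈ parab cs I, cs.invParity y r = 0 →
      cs.invParity (cs.simple i * y) r = 0 := by
    intro i hi y hy ih
    have hconj : y * r * y⁻¹ ≠ cs.simple i := by
      rw [Ne, conj_eq_iff_eq_conj_inv]
      rintro rfl
      exact hr (mul_mem (mul_mem (inv_mem hy) (Subgroup.subset_closure ⟨i, hi, rfl⟩)) hy)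
    rw [invParity_mul, ih, invParity_simple, if_neg hconj, zero_add]
  induction hp using Subgroup.closure_induction_left with
  | one => exact cs.invParity_one r
  | mul_left x hx y hy ih =>
    obtain ⟨i, hi, rfl⟩ := hx
    exact step i hi y hy ih
  | inv_mul_cancel x hx y hy ih =>
    obtain ⟨i, hi, rfl⟩ := hx
    rw [cs.inv_simple]
    exact step i hi y hy ih

lemma length_mul_lt_iff_of_mem_parab {t w p : W} (ht : cs.IsReflection t) (hp : p ∈ parab cs I)
    (hw : w⁻¹ * t * w ∉ parab cs I) :
    cs.length (t * (w * p)) < cs.length (w * p) ↔ cs.length (t * w) < cs.length w := by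
  rw [← invParity_inv_eq_one_iff cs ht, ← invParity_inv_eq_one_iff cs ht, mul_inv_rev,
    invParity_mul, inv_inv, invParity_eq_zero_of_mem_parab (inv_mem hp) hw, add_zero]

variable {t : W}

lemma length_mul_lt_iff_of_mk_eq (ht : cs.IsReflection t) {u w : W}
    (huw : (QuotientGroup.mk u : W ⧸ parab cs I) = QuotientGroup.mk w)
    (hne : (QuotientGroup.mk (t * w) : W ⧸ parab cs I) ≠ QuotientGroup.mk w) :
    cs.length (t * u) < cs.length u ↔ cs.length (t * w) < cs.length w := by
  obtain ⟨p, hp, rfl⟩ : ∃ p ∈ parab cs I, w * p = u :=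
    ⟨w⁻¹ * u, QuotientGroup.eq.mp huw.symm, mul_inv_cancel_left w u⟩
  exact length_mul_lt_iff_of_mem_parab ht hp (hne ∘ (QuotientGroup.mk_mul_eq_mk_iff _ t w).mpr)

variable (cs I) in
lemma minLenQ_le_length (u : W) : minLenQ cs I (QuotientGroup.mk u) ≤ cs.length u :=
  Nat.sInf_le ⟨u, rfl, rfl⟩

variable (cs I) in
lemma exists_length_eq_minLenQ (x : W ⧸ parab cs I) :
    ∃ u : W, (QuotientGroup.mk u : W ⧸ parab cs I) = x ∧ cs.length u = minLenQ cs I x := by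
  have hne : (cs.length '' {u : W | (QuotientGroup.mk u : W ⧸ parab cs I) = x}).Nonempty :=
    ⟨_, x.out, QuotientGroup.out_eq' x, rfl⟩
  exact Nat.sInf_mem hne

lemma minLenQ_lt_of_length_mul_lt (ht : cs.IsReflection t) {w : W}
    (hne : (QuotientGroup.mk (t * w) : W ⧸ parab cs I) ≠ QuotientGroup.mk w)
    (hlt : cs.length (t * w) < cs.length w) :
    minLenQ cs I (QuotientGroup.mk (t * w)) < minLenQ cs I (QuotientGroup.mk w) := by
  obtain ⟨a, ha, hla⟩ := exists_length_eq_minLenQ cs I (QuotientGroup.mk w)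
  calc minLenQ cs I (QuotientGroup.mk (t * w))
      = minLenQ cs I (QuotientGroup.mk (t * a)) := by rw [QuotientGroup.mk_mul_left_congr t ha]
    _ ≤ cs.length (t * a) := minLenQ_le_length cs I _
    _ < cs.length a := (length_mul_lt_iff_of_mk_eq ht ha hne).mpr hlt
    _ = minLenQ cs I (QuotientGroup.mk w) := hla

lemma length_mul_lt_iff_minLenQ_lt (ht : cs.IsReflection t) {w : W}
    (hne : (QuotientGroup.mk (t * w) : W ⧸ parab cs I) ≠ QuotientGroup.mk w) :
    cs.length (t * w) < cs.length w ↔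
      minLenQ cs I (QuotientGroup.mk (t * w)) < minLenQ cs I (QuotientGroup.mk w) := by
  refine ⟨minLenQ_lt_of_length_mul_lt ht hne, fun hmin ↦ ?_⟩
  by_contra hnlt
  have htt : t * (t * w) = w := by rw [← mul_assoc, ht.mul_self, one_mul]
  have hlt : cs.length (t * (t * w)) < cs.length (t * w) := by
    rw [htt]
    exact (not_lt.mp hnlt).lt_of_ne (ht.length_mul_right_ne w).symm
  have hne' : (QuotientGroup.mk (t * (t * w)) : W ⧸ parab cs I) ≠ QuotientGroup.mk (t * w) := by
    rw [htt]
    exact Ne.symm hne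
  have hgt := minLenQ_lt_of_length_mul_lt ht hne' hlt
  rw [htt] at hgt
  exact lt_asymm hmin hgt

lemma mk_foldW (ht : cs.IsReflection t) (w : W) :
    (QuotientGroup.mk (foldW cs t w) : W ⧸ parab cs I) =
      if minLenQ cs I (QuotientGroup.mk (t * w)) < minLenQ cs I (QuotientGroup.mk w) then
        QuotientGroup.mk (t * w) else QuotientGroup.mk w := by
  by_cases hfix : (QuotientGroup.mk (t * w) : W ⧸ parab cs I) = QuotientGroup.mk w
  · rw [hfix, ite_self, foldW]
    split_ifs
    · exact hfix
    · rfl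
  · rw [foldW, apply_ite QuotientGroup.mk]
    exact if_congr (length_mul_lt_iff_minLenQ_lt ht hfix) rfl rfl

lemma foldQ_mk (ht : cs.IsReflection t) (w : W) :
    foldQ cs I t (QuotientGroup.mk w) =
      if minLenQ cs I (QuotientGroup.mk (t * w)) < minLenQ cs I (QuotientGroup.mk w) then
        QuotientGroup.mk (t * w) else QuotientGroup.mk w := by
  rw [foldQ, mk_foldW ht, QuotientGroup.mk_mul_left_congr t (QuotientGroup.out_eq' _),
    QuotientGroup.out_eq']

end Parabolic

/-- The coset left-folding map `t⁺(wW_I) := t⁺(w)W_I` is well defined (independent of the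
representative), and satisfies `t⁺(wW_I) = twW_I` if `wW_I ∈ R_t^I` (i.e.
`ℓ((tw)^I) < ℓ(w^I)`) and `t⁺(wW_I) = wW_I` if `wW_I ∈ L_t^I ∪ F_t^I` (i.e.
`ℓ((tw)^I) ≥ ℓ(w^I)`). -/
theorem foldQ_well_defined (cs : CoxeterSystem M W) (I : Set B) (t : W)
    (ht : cs.IsReflection t) :
    (∀ w : W, foldQ cs I t (QuotientGroup.mk w) =
        (QuotientGroup.mk (foldW cs t w) : W ⧸ parab cs I)) ∧
    (∀ w : W,
      (minLenQ cs I (QuotientGroup.mk (t * w)) < minLenQ cs I (QuotientGroup.mk w) →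
        foldQ cs I t (QuotientGroup.mk w) = (QuotientGroup.mk (t * w) : W ⧸ parab cs I)) ∧
      (minLenQ cs I (QuotientGroup.mk w) ≤ minLenQ cs I (QuotientGroup.mk (t * w)) →
        foldQ cs I t (QuotientGroup.mk w) = (QuotientGroup.mk w : W ⧸ parab cs I))) :=
  ⟨fun w ↦ by rw [foldQ_mk ht, mk_foldW ht],
    fun w ↦ ⟨fun h ↦ by rw [foldQ_mk ht, if_pos h], fun h ↦ by rw [foldQ_mk ht, if_neg h.not_gt]⟩⟩
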